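/- Let Λ be a numerical semigroup of rank k(Λ) ≥ 2, with r right generators and σ strong generators. Then Λ has exactly r(r−1)/2 + σ grandchildren. -/

import Mathlib

/-- A numerical semigroup: a cofinite submonoid of ℕ, viewed as a set of naturals. -/
def IsNumericalSemigroup (S : Set ℕ) : Prop :=
  0 ∈ S ∧ (∀ a ∈ S, ∀ b ∈ S, a + b ∈ S) ∧ ∃ N : ℕ, ∀ n : ℕ, N ≤ n → n ∈ S

/-- The conductor: the smallest `N` such that every `n ≥ N` belongs to `S`. -/
noncomputable def sgConductor (S : Set ℕ) : ℕ :=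
  sInf {N : ℕ | ∀ n : ℕ, N ≤ n → n ∈ S}

/-- The genus: the number of gaps. -/
noncomputable def sgGenus (S : Set ℕ) : ℕ :=
  Sᶜ.ncard

/-- The rank `k(Λ) = c(Λ) - g(Λ)`. -/
noncomputable def sgRank (S : Set ℕ) : ℕ :=
  sgConductor S - sgGenus S

/-- The multiplicity: the smallest nonzero element. -/
noncomputable def sgMultiplicity (S : Set ℕ) : ℕ :=
  sInf {n : ℕ | n ∈ S ∧ n ≠ 0}

/-- The Frobenius number: the largest gap, i.e. the conductor minus one. -/
noncomputable def sgFrobenius (S : Set ℕ) : ℕ :=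
  sgConductor S - 1

/-- `sgElem S j` is the element `λ_j` of `S = {λ_0 = 0 < λ_1 < λ_2 < ⋯}`. -/
noncomputable def sgElem (S : Set ℕ) (j : ℕ) : ℕ :=
  Nat.nth (· ∈ S) j

/-- The jump `u_j = λ_{j+1} - λ_j`. -/
noncomputable def sgJump (S : Set ℕ) (j : ℕ) : ℕ :=
  sgElem S (j + 1) - sgElem S j

/-- The left elements: elements of `S` smaller than the Frobenius number. -/
def sgLeftElements (S : Set ℕ) : Set ℕ :=
  {x : ℕ | x ∈ S ∧ x + 1 < sgConductor S}

/-- A minimal generator: a nonzero element not the sum of two nonzero elements. -/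
def IsMinimalGenerator (S : Set ℕ) (x : ℕ) : Prop :=
  x ∈ S ∧ x ≠ 0 ∧ ¬ ∃ a ∈ S, ∃ b ∈ S, a ≠ 0 ∧ b ≠ 0 ∧ a + b = x

/-- A right generator: a minimal generator larger than the Frobenius number. -/
def IsRightGenerator (S : Set ℕ) (x : ℕ) : Prop :=
  IsMinimalGenerator S x ∧ sgFrobenius S < x

/-- A strong generator: a right generator `μ` such that `μ + m(Λ)` is a minimal
generator of `Λ ∖ {μ}`. -/
noncomputable def IsStrongGenerator (S : Set ℕ) (x : ℕ) : Prop :=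
  IsRightGenerator S x ∧ IsMinimalGenerator (S \ {x}) (x + sgMultiplicity S)

/-- A new generator of `Λ`: a minimal generator of `Λ` that is not a minimal
generator of `Λ ∪ {F(Λ)}`. -/
noncomputable def IsNewGenerator (S : Set ℕ) (x : ℕ) : Prop :=
  IsMinimalGenerator S x ∧ ¬ IsMinimalGenerator (S ∪ {sgFrobenius S}) x

/-- `x` (an element `λ_s ≥ c(Λ)`) is an order-`p` seed of `Λ` if
`x + λ_p ≠ λ_i + λ_j` for all `p < i ≤ j < s`, i.e. for all `i ≤ j` with
`p < i` and `λ_j < x`. -/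
noncomputable def IsSeed (S : Set ℕ) (p x : ℕ) : Prop :=
  sgConductor S ≤ x ∧ ∀ i j : ℕ, p < i → i ≤ j → sgElem S j < x →
    x + sgElem S p ≠ sgElem S i + sgElem S j

/-- `T` is a child of `S`: obtained by removing one right generator. -/
def IsChild (T S : Set ℕ) : Prop :=
  ∃ μ : ℕ, IsRightGenerator S μ ∧ T = S \ {μ}

/-- A grandchild: a child of a child. -/
def IsGrandchild (T S : Set ℕ) : Prop :=
  ∃ C : Set ℕ, IsChild C S ∧ IsChild T C

/-- A great-grandchild: a child of a grandchild. -/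
def IsGreatGrandchild (T S : Set ℕ) : Prop :=
  ∃ C : Set ℕ, IsGrandchild C S ∧ IsChild T C

/-- `⟨a,b,c,…⟩|_κ`: the smallest numerical semigroup containing a given set. -/
def sgClosure (A : Set ℕ) : Set ℕ :=
  ⋂₀ {S : Set ℕ | IsNumericalSemigroup S ∧ A ⊆ S}

/-!
Since `k(Λ) ≥ 2`, the multiplicity `m` is smaller than the conductor `c`, and every right
generator `μ` satisfies `c ≤ μ < c + m`. The child `Λ ∖ {μ}` therefore has conductor `μ + 1`
and multiplicity `m`, and its right generators are the right generators of `Λ` beyond `μ`,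
together with `μ + m` precisely when `μ` is strong. So the grandchildren are the sets
`Λ ∖ {μ, ν}` for pairs of right generators and `Λ ∖ {μ, μ + m}` for strong `μ`. All of these
are distinct: a finite subset of `Λ` is recovered from its complement in `Λ`, and `μ + m ≥ c + m`
is never a right generator.
-/

theorem Finset.injOn_sdiff_coe {α : Type*} (S : Set α) :
    Set.InjOn (fun t : Finset α => S \ ↑t) {t | ↑t ⊆ S} := fun t ht u hu h =>
  Finset.coe_injective <| by
    rw [← Set.sdiff_sdiff_cancel_left ht, ← Set.sdiff_sdiff_cancel_left hu]
    exact congrArg (S \ ·) h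

theorem card_powersetCard_two_union_image_pair {R P : Finset ℕ} {m : ℕ}
    (h : ∀ μ ∈ P, μ + m ∉ R) :
    (R.powersetCard 2 ∪ P.image fun μ => ({μ, μ + m} : Finset ℕ)).card =
      R.card.choose 2 + P.card := by
  have hinj : Function.Injective fun μ => ({μ, μ + m} : Finset ℕ) := by
    intro a b (hab : ({a, a + m} : Finset ℕ) = {b, b + m})
    have ha : a ∈ ({b, b + m} : Finset ℕ) := by rw [← hab]; simp
    have hb : b ∈ ({a, a + m} : Finset ℕ) := by rw [hab]; simp
    simp only [Finset.mem_insert, Finset.mem_singleton] at ha hb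
    omega
  have hdisj : Disjoint (R.powersetCard 2) (P.image fun μ => ({μ, μ + m} : Finset ℕ)) := by
    rw [Finset.disjoint_right]
    rintro _ ht htR
    obtain ⟨μ, hμ, rfl⟩ := Finset.mem_image.1 ht
    exact h μ hμ ((Finset.mem_powersetCard.1 htR).1 (by simp))
  rw [Finset.card_union_of_disjoint hdisj, Finset.card_powersetCard,
    Finset.card_image_of_injective _ hinj]

namespace IsMinimalGenerator

variable {S : Set ℕ} {μ x : ℕ}

theorem diff_singleton (hx : IsMinimalGenerator S x) (hne : x ≠ μ) :
    IsMinimalGenerator (S \ {μ}) x :=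
  ⟨⟨hx.1, hne⟩, hx.2.1, fun ⟨a, ha, b, hb, hab⟩ => hx.2.2 ⟨a, ha.1, b, hb.1, hab⟩⟩

/-- A decomposition of `x` in `S` that is lost in `S \ {μ}` uses `μ`, so its other summand
`x - μ` would be a nonzero element below the multiplicity. -/
theorem of_diff_singleton (hx : IsMinimalGenerator (S \ {μ}) x)
    (hlt : x < μ + sgMultiplicity S) : IsMinimalGenerator S x := by
  refine ⟨hx.1.1, hx.2.1, fun ⟨a, ha, b, hb, ha0, hb0, hab⟩ => ?_⟩
  have hma : sgMultiplicity S ≤ a := Nat.sInf_le ⟨ha, ha0⟩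
  have hmb : sgMultiplicity S ≤ b := Nat.sInf_le ⟨hb, hb0⟩
  have haμ : a ≠ μ := by omega
  have hbμ : b ≠ μ := by omega
  exact hx.2.2 ⟨a, ⟨ha, haμ⟩, b, ⟨hb, hbμ⟩, ha0, hb0, hab⟩

end IsMinimalGenerator

theorem sgConductor_le_of_isRightGenerator {S : Set ℕ} {μ : ℕ} (hμ : IsRightGenerator S μ) :
    sgConductor S ≤ μ := by
  have := hμ.2
  unfold sgFrobenius at this
  omega

namespace IsNumericalSemigroup

variable {S : Set ℕ} {R P : Finset ℕ} {μ ν x : ℕ}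

theorem mem_of_sgConductor_le (hS : IsNumericalSemigroup S) (hx : sgConductor S ≤ x) : x ∈ S := by
  obtain ⟨N, hN⟩ := hS.2.2
  exact Nat.sInf_mem (s := {N | ∀ n, N ≤ n → n ∈ S}) ⟨N, hN⟩ x hx

theorem sgRank_eq_ncard (hS : IsNumericalSemigroup S) :
    sgRank S = (S ∩ Set.Iio (sgConductor S)).ncard := by
  have hsub : S ∩ Set.Iio (sgConductor S) ⊆ Set.Iio (sgConductor S) := Set.inter_subset_right
  have hgaps : Sᶜ = Set.Iio (sgConductor S) \ (S ∩ Set.Iio (sgConductor S)) := by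
    ext n
    by_cases hn : n ∈ S
    · simp [hn]
    · simpa [hn] using lt_of_not_ge fun h => hn (mem_of_sgConductor_le hS h)
  have hle := Set.ncard_le_ncard hsub
  rw [Set.ncard_Iio_nat] at hle
  rw [sgRank, sgGenus, hgaps, Set.ncard_sdiff hsub ((Set.finite_Iio _).subset hsub),
    Set.ncard_Iio_nat]
  omega

theorem sgMultiplicity_mem (hS : IsNumericalSemigroup S) :
    sgMultiplicity S ∈ S ∧ sgMultiplicity S ≠ 0 :=
  Nat.sInf_mem (s := {n | n ∈ S ∧ n ≠ 0})
    ⟨sgConductor S + 1, mem_of_sgConductor_le hS (Nat.le_succ _), by omega⟩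

theorem sgMultiplicity_lt_sgConductor (hS : IsNumericalSemigroup S) (hk : 2 ≤ sgRank S) :
    sgMultiplicity S < sgConductor S := by
  rw [sgRank_eq_ncard hS] at hk
  obtain ⟨y, ⟨hyS, hyc⟩, hy0⟩ := Set.exists_ne_of_one_lt_ncard hk 0
  exact (Nat.sInf_le ⟨hyS, hy0⟩ : sgMultiplicity S ≤ y).trans_lt hyc

theorem lt_sgConductor_add_sgMultiplicity (hS : IsNumericalSemigroup S) (hc : 0 < sgConductor S)
    (hx : IsMinimalGenerator S x) : x < sgConductor S + sgMultiplicity S := by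
  by_contra! h
  obtain ⟨hm, hm0⟩ := sgMultiplicity_mem hS
  exact hx.2.2 ⟨_, hm, x - sgMultiplicity S, mem_of_sgConductor_le hS (by omega), hm0, by omega,
    by omega⟩

theorem finite_setOf_isRightGenerator (hS : IsNumericalSemigroup S) (hc : 0 < sgConductor S) :
    {μ | IsRightGenerator S μ}.Finite :=
  (Set.finite_Ico (sgConductor S) (sgConductor S + sgMultiplicity S)).subset fun _ hμ =>
    ⟨sgConductor_le_of_isRightGenerator hμ, lt_sgConductor_add_sgMultiplicity hS hc hμ.1⟩

theorem diff_singleton (hS : IsNumericalSemigroup S) (hμ : IsMinimalGenerator S μ) :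
    IsNumericalSemigroup (S \ {μ}) := by
  obtain ⟨h0, hadd, N, hN⟩ := hS
  refine ⟨⟨h0, Ne.symm hμ.2.1⟩, fun a ha b hb => ⟨hadd a ha.1 b hb.1, ?_⟩, N + μ + 1,
    fun n hn => ⟨hN n (by omega), by simp only [Set.mem_singleton_iff]; omega⟩⟩
  rintro (hab : a + b = μ)
  have ha0 : a ≠ 0 := by rintro rfl; exact hb.2 (by simpa using hab)
  have hb0 : b ≠ 0 := by rintro rfl; exact ha.2 (by simpa using hab)
  exact hμ.2.2 ⟨a, ha.1, b, hb.1, ha0, hb0, hab⟩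

theorem sgConductor_diff_singleton (hS : IsNumericalSemigroup S) (hμ : sgConductor S ≤ μ) :
    sgConductor (S \ {μ}) = μ + 1 := by
  have hsucc : ∀ n, μ + 1 ≤ n → n ∈ S \ {μ} := fun n hn =>
    ⟨mem_of_sgConductor_le hS (by omega), by simp only [Set.mem_singleton_iff]; omega⟩
  refine le_antisymm (Nat.sInf_le hsucc) (Nat.succ_le_of_lt (lt_of_not_ge fun h => ?_))
  exact (Nat.sInf_mem (s := {N | ∀ n, N ≤ n → n ∈ S \ {μ}}) ⟨_, hsucc⟩ μ h).2 rfl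

theorem sgMultiplicity_diff_singleton (hS : IsNumericalSemigroup S) (hμ : μ ≠ sgMultiplicity S) :
    sgMultiplicity (S \ {μ}) = sgMultiplicity S := by
  obtain ⟨hm, hm0⟩ := sgMultiplicity_mem hS
  have hmem : sgMultiplicity S ∈ S \ {μ} := ⟨hm, Ne.symm hμ⟩
  refine le_antisymm (Nat.sInf_le ⟨hmem, hm0⟩) ?_
  obtain ⟨⟨hxS, -⟩, hx0⟩ := Nat.sInf_mem (⟨_, hmem, hm0⟩ : {n | n ∈ S \ {μ} ∧ n ≠ 0}.Nonempty)
  exact Nat.sInf_le ⟨hxS, hx0⟩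

theorem isRightGenerator_diff_singleton_iff (hS : IsNumericalSemigroup S)
    (hm : sgMultiplicity S < sgConductor S) (hμ : IsRightGenerator S μ) :
    IsRightGenerator (S \ {μ}) ν ↔
      (IsRightGenerator S ν ∧ μ < ν) ∨ (ν = μ + sgMultiplicity S ∧ IsStrongGenerator S μ) := by
  have hμc := sgConductor_le_of_isRightGenerator hμ
  have hm0 := (sgMultiplicity_mem hS).2
  have hfrob : sgFrobenius (S \ {μ}) = μ := by
    rw [sgFrobenius, sgConductor_diff_singleton hS hμc, Nat.add_sub_cancel]
  simp only [IsRightGenerator, hfrob]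
  constructor
  · rintro ⟨hν, hμν⟩
    have hlt := lt_sgConductor_add_sgMultiplicity (diff_singleton hS hμ.1)
      (by rw [sgConductor_diff_singleton hS hμc]; omega) hν
    rw [sgConductor_diff_singleton hS hμc, sgMultiplicity_diff_singleton hS (by omega)] at hlt
    by_cases hνeq : ν = μ + sgMultiplicity S
    · exact Or.inr ⟨hνeq, hμ, hνeq ▸ hν⟩
    · refine Or.inl ⟨⟨IsMinimalGenerator.of_diff_singleton hν (by omega), ?_⟩, hμν⟩
      unfold sgFrobenius
      omega
  · rintro (⟨hν, hμν⟩ | ⟨rfl, hstrong⟩)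
    · exact ⟨IsMinimalGenerator.diff_singleton hν.1 (by omega), hμν⟩
    · exact ⟨hstrong.2, by omega⟩

theorem isGrandchild_iff (hS : IsNumericalSemigroup S) (hm : sgMultiplicity S < sgConductor S)
    {T : Set ℕ} :
    IsGrandchild T S ↔
      (∃ μ ν, IsRightGenerator S μ ∧ IsRightGenerator S ν ∧ μ < ν ∧ T = S \ {μ, ν}) ∨
      ∃ μ, IsStrongGenerator S μ ∧ T = S \ {μ, μ + sgMultiplicity S} := by
  have hpair (μ ν : ℕ) : (S \ {μ}) \ {ν} = S \ {μ, ν} := by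
    rw [Set.sdiff_sdiff, Set.singleton_union, Set.pair_comm]
  constructor
  · rintro ⟨C, ⟨μ, hμ, rfl⟩, ⟨ν, hν, rfl⟩⟩
    rcases (isRightGenerator_diff_singleton_iff hS hm hμ).1 hν with ⟨hν, hμν⟩ | ⟨rfl, hstrong⟩
    · exact Or.inl ⟨μ, ν, hμ, hν, hμν, hpair μ ν⟩
    · exact Or.inr ⟨μ, hstrong, hpair μ _⟩
  · rintro (⟨μ, ν, hμ, hν, hμν, rfl⟩ | ⟨μ, hstrong, rfl⟩)
    · exact ⟨S \ {μ}, ⟨μ, hμ, rfl⟩, ν,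
        (isRightGenerator_diff_singleton_iff hS hm hμ).2 (Or.inl ⟨hν, hμν⟩), (hpair μ ν).symm⟩
    · exact ⟨S \ {μ}, ⟨μ, hstrong.1, rfl⟩, μ + sgMultiplicity S,
        (isRightGenerator_diff_singleton_iff hS hm hstrong.1).2 (Or.inr ⟨rfl, hstrong⟩),
        (hpair μ _).symm⟩

theorem setOf_isGrandchild_eq_image (hS : IsNumericalSemigroup S)
    (hm : sgMultiplicity S < sgConductor S) (hR : ∀ μ, μ ∈ R ↔ IsRightGenerator S μ)
    (hP : ∀ μ, μ ∈ P ↔ IsStrongGenerator S μ) :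
    {T | IsGrandchild T S} = (fun t : Finset ℕ => S \ ↑t) ''
      ↑(R.powersetCard 2 ∪ P.image fun μ => ({μ, μ + sgMultiplicity S} : Finset ℕ)) := by
  ext T
  rw [Set.mem_image]
  change IsGrandchild T S ↔ _
  rw [isGrandchild_iff hS hm]
  constructor
  · rintro (⟨μ, ν, hμ, hν, hμν, rfl⟩ | ⟨μ, hμ, rfl⟩)
    · refine ⟨{μ, ν}, Finset.mem_union_left _
        (Finset.mem_powersetCard.2 ⟨?_, Finset.card_pair hμν.ne⟩), by simp⟩
      simp only [Finset.insert_subset_iff, Finset.singleton_subset_iff, hR]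
      exact ⟨hμ, hν⟩
    · exact ⟨_, Finset.mem_union_right _ (Finset.mem_image_of_mem _ ((hP μ).2 hμ)), by simp⟩
  · rintro ⟨t, ht, rfl⟩
    rcases Finset.mem_union.1 ht with ht | ht
    · obtain ⟨htR, htcard⟩ := Finset.mem_powersetCard.1 ht
      obtain ⟨a, b, hab, rfl⟩ := Finset.card_eq_two.1 htcard
      simp only [Finset.insert_subset_iff, Finset.singleton_subset_iff, hR] at htR
      refine Or.inl ?_
      rcases hab.lt_or_gt with h | h
      · exact ⟨a, b, htR.1, htR.2, h, by simp⟩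
      · exact ⟨b, a, htR.2, htR.1, h, by simp [Set.pair_comm]⟩
    · obtain ⟨μ, hμ, rfl⟩ := Finset.mem_image.1 ht
      exact Or.inr ⟨μ, (hP μ).1 hμ, by simp⟩

theorem ncard_setOf_isGrandchild (hS : IsNumericalSemigroup S)
    (hm : sgMultiplicity S < sgConductor S) (hR : ∀ μ, μ ∈ R ↔ IsRightGenerator S μ)
    (hP : ∀ μ, μ ∈ P ↔ IsStrongGenerator S μ) :
    {T | IsGrandchild T S}.ncard = R.card.choose 2 + P.card := by
  have hdisj : ∀ μ ∈ P, μ + sgMultiplicity S ∉ R := fun μ hμ hμR => by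
    have := lt_sgConductor_add_sgMultiplicity hS (by omega) ((hR _).1 hμR).1
    have := sgConductor_le_of_isRightGenerator ((hP μ).1 hμ).1
    omega
  have hsub : ∀ t ∈ R.powersetCard 2 ∪ P.image fun μ => ({μ, μ + sgMultiplicity S} : Finset ℕ),
      ↑t ⊆ S := by
    intro t ht
    rcases Finset.mem_union.1 ht with ht | ht
    · exact fun μ hμ => ((hR μ).1 ((Finset.mem_powersetCard.1 ht).1 hμ)).1.1
    · obtain ⟨μ, hμ, rfl⟩ := Finset.mem_image.1 ht
      have hμ := ((hP μ).1 hμ).1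
      have hμc := sgConductor_le_of_isRightGenerator hμ
      rw [Finset.coe_pair, Set.pair_subset_iff]
      exact ⟨hμ.1.1, mem_of_sgConductor_le hS (by omega)⟩
  rw [setOf_isGrandchild_eq_image hS hm hR hP, ((Finset.injOn_sdiff_coe S).mono hsub).ncard_image,
    Set.ncard_coe_finset, card_powersetCard_two_union_image_pair hdisj]

end IsNumericalSemigroup

theorem statement10 (S : Set ℕ) (hS : IsNumericalSemigroup S) (hk : 2 ≤ sgRank S)
    (r σ : ℕ)
    (hr : r = {μ : ℕ | IsRightGenerator S μ}.ncard)
    (hσ : σ = {μ : ℕ | IsStrongGenerator S μ}.ncard) :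
    {T : Set ℕ | IsGrandchild T S}.ncard = r * (r - 1) / 2 + σ := by
  have hm := IsNumericalSemigroup.sgMultiplicity_lt_sgConductor hS hk
  have hR := IsNumericalSemigroup.finite_setOf_isRightGenerator hS (by omega)
  have hP : {μ | IsStrongGenerator S μ}.Finite := hR.subset fun _ hμ => hμ.1
  rw [IsNumericalSemigroup.ncard_setOf_isGrandchild hS hm (fun _ => hR.mem_toFinset)
    (fun _ => hP.mem_toFinset), hr, hσ, Set.ncard_eq_toFinset_card _ hR,
    Set.ncard_eq_toFinset_card _ hP, Nat.choose_two_right]
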